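/- arXiv:1105.3180 — 6 statements merged into one kernel-verified Lean document; each statement's English description precedes it below -/
import Mathlib

section
/- Let k ∈ ℝ. Then 𝔼_ℙ[(e^X − e^k)₊] = ∫_0^∞ e^{−s} ℙ*({X > k + s}) ds. (This is the Carr–Madan representation: the normalized call price equals ℙ*(X − E > k) where E is an independent standard exponential random variable under ℙ*.) -/
open MeasureTheory Real Set

/-!
Under the share measure `ℙ*`, the layer-cake formula for `(X - k)₊` with weight `e^{-s}` gives
`∫₀^∞ e^{-s} ℙ*(X > k + s) ds = 𝔼*[(1 - e^{k - X})₊]`. Passing back to `ℙ` multiplies the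
integrand by the density `e^X`, and `e^X (1 - e^{k - X}) = e^X - e^k`. Integrability of `e^X`
makes `ℙ*` finite, so both sides are the real parts of the same finite lower integral.
-/

lemma integral_exp_neg_from_zero (c : ℝ) : ∫ t in (0 : ℝ)..c, exp (-t) = 1 - exp (-c) := by
  rw [intervalIntegral.integral_comp_neg fun t => exp t, integral_exp, neg_zero, exp_zero]

lemma integral_max_zero_eq_toReal_lintegral {Ω : Type*} [MeasurableSpace Ω] {μ : Measure Ω}
    {f : Ω → ℝ} (hf : AEStronglyMeasurable f μ) :
    ∫ ω, max (f ω) 0 ∂μ = (∫⁻ ω, ENNReal.ofReal (f ω) ∂μ).toReal := by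
  rw [integral_eq_lintegral_of_nonneg_ae (f := fun ω => max (f ω) 0)
    (.of_forall fun ω => le_max_right _ _) (by fun_prop)]
  simp only [ENNReal.ofReal_max, ENNReal.ofReal_zero, max_zero]

section Threshold

variable {Ω : Type*} [MeasurableSpace Ω] {Y : Ω → ℝ} (k : ℝ)

/-- The layer-cake formula for `(Y - k)₊` with weight `e^{-s}`. -/
lemma lintegral_measure_lt_mul_exp_neg (μ : Measure Ω) (hY : Measurable Y) :
    ∫⁻ s in Ioi 0, μ {ω | k + s < Y ω} * ENNReal.ofReal (exp (-s))
      = ∫⁻ ω, ENNReal.ofReal (1 - exp (k - Y ω)) ∂μ := by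
  have layer_cake := lintegral_comp_eq_lintegral_meas_lt_mul μ
    (f := fun ω => max (Y ω - k) 0) (g := fun t => exp (-t))
    (.of_forall fun ω => le_max_right _ _) ((hY.sub_const k).max measurable_const).aemeasurable
    (fun t _ => (continuous_exp.comp continuous_neg).intervalIntegrable 0 t)
    (.of_forall fun t => (exp_pos _).le)
  symm
  convert layer_cake using 1
  · refine lintegral_congr fun ω => ?_
    rw [integral_exp_neg_from_zero]
    rcases le_total (Y ω - k) 0 with hle | hge
    · rw [max_eq_right hle, neg_zero, exp_zero, sub_self, ENNReal.ofReal_zero,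
        ENNReal.ofReal_of_nonpos (by linarith [one_le_exp (x := k - Y ω) (by linarith)])]
    · rw [max_eq_left hge, neg_sub]
  · refine setLIntegral_congr_fun measurableSet_Ioi fun t ht => ?_
    congr 2
    ext ω
    simp only [mem_ofPred_eq, lt_max_iff, not_lt_of_gt (mem_Ioi.mp ht), or_false]
    constructor <;> intro h <;> linarith

lemma integral_exp_neg_mul_measure_lt (μ : Measure Ω) [IsFiniteMeasure μ] :
    ∫ s in Ioi 0, exp (-s) * (μ {ω | k + s < Y ω}).toReal
      = (∫⁻ s in Ioi 0, μ {ω | k + s < Y ω} * ENNReal.ofReal (exp (-s))).toReal := by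
  have tail_antitone : Antitone fun s => μ {ω | k + s < Y ω} := fun s t hst =>
    measure_mono fun ω (hω : k + t < Y ω) => show k + s < Y ω by linarith
  rw [← integral_toReal (f := fun s => μ {ω | k + s < Y ω} * ENNReal.ofReal (exp (-s)))
    (tail_antitone.measurable.mul (by fun_prop)).aemeasurable
    (.of_forall fun s => ENNReal.mul_lt_top (measure_lt_top _ _) ENNReal.ofReal_lt_top)]
  refine setIntegral_congr_fun measurableSet_Ioi fun s _ => ?_
  rw [ENNReal.toReal_mul, ENNReal.toReal_ofReal (exp_pos _).le, mul_comm]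

end Threshold

lemma lintegral_withDensity_exp_one_sub_exp_sub {Ω : Type*} [MeasurableSpace Ω] (P : Measure Ω)
    {X : Ω → ℝ} (hX : Measurable X) (k : ℝ) :
    ∫⁻ ω, ENNReal.ofReal (1 - exp (k - X ω)) ∂(P.withDensity fun ω => ENNReal.ofReal (exp (X ω)))
      = ∫⁻ ω, ENNReal.ofReal (exp (X ω) - exp k) ∂P := by
  rw [lintegral_withDensity_eq_lintegral_mul _ (by fun_prop) (by fun_prop)]
  refine lintegral_congr fun ω => ?_
  rw [Pi.mul_apply, ← ENNReal.ofReal_mul (exp_pos _).le, mul_sub, mul_one, ← exp_add,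
    add_sub_cancel]

theorem call_price_carr_madan_representation_general
    {Ω : Type*} [MeasurableSpace Ω] (P : Measure Ω)
    (X : Ω → ℝ) (hX : Measurable X)
    (hint : Integrable (fun ω => Real.exp (X ω)) P) (k : ℝ) :
    ∫ ω, max (Real.exp (X ω) - Real.exp k) 0 ∂P
      = ∫ s in Set.Ioi (0 : ℝ), Real.exp (-s) *
          ((P.withDensity fun ω => ENNReal.ofReal (Real.exp (X ω)))
            {ω | k + s < X ω}).toReal := by
  have : IsFiniteMeasure _ := isFiniteMeasure_withDensity_ofReal hint.hasFiniteIntegral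
  rw [integral_max_zero_eq_toReal_lintegral (by fun_prop),
    integral_exp_neg_mul_measure_lt, lintegral_measure_lt_mul_exp_neg k _ hX,
    lintegral_withDensity_exp_one_sub_exp_sub P hX]

/-- Carr–Madan representation: the normalized call price equals
`∫_0^∞ e^{−s} ℙ*(X > k + s) ds`, i.e. `ℙ*(X − E > k)` where `E` is an independent
standard exponential random variable under the share measure `ℙ*`
(the measure with density `e^X` with respect to `ℙ`). -/
theorem call_price_carr_madan_representation
    {Ω : Type*} [MeasurableSpace Ω] (P : Measure Ω) [IsProbabilityMeasure P]
    (X : Ω → ℝ) (hX : Measurable X)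
    (hint : Integrable (fun ω => Real.exp (X ω)) P)
    (hmean : ∫ ω, Real.exp (X ω) ∂P = 1) (k : ℝ) :
    ∫ ω, max (Real.exp (X ω) - Real.exp k) 0 ∂P
      = ∫ s in Set.Ioi (0 : ℝ), Real.exp (-s) *
          ((P.withDensity fun ω => ENNReal.ofReal (Real.exp (X ω)))
            {ω | k + s < X ω}).toReal :=
  call_price_carr_madan_representation_general P X hX hint k
end

section
/- Let f : ℝ → [0, ∞] be Borel measurable and y > 0. Then ∫_{x=0}^{y} ∫_{u=y−x}^{y} f(u) f(x) du dx = 2 ∫_{x=0}^{y/2} ∫_{u=y−x}^{y} f(u) f(x) du dx + (∫_{y/2}^{y} f(u) du)². (Splitting of the double integral appearing in the second-order coefficient d₂, using the symmetry of the integrand f(u)f(x) about the line u = x.) -/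
open MeasureTheory Set ENNReal

/-! Split the outer range at `y / 2`. For `x ∈ (y/2, y)` the inner range `(y - x, y)` splits at
`y / 2` as well, and the part over `(y/2, y)²` contributes `(∫_{y/2}^{y} f)²`. The remaining part,
over `{y/2 < x < y, y - x < u < y/2}`, is the mirror image under `(x, u) ↦ (u, x)` of the region
`{0 < x < y/2, y - x < u < y}`, so by Tonelli it equals `∫_{0}^{y/2} ∫_{y-x}^{y} f(u) f(x)`. -/

section IntervalSplit

variable {α : Type*} [LinearOrder α] [TopologicalSpace α] [OrderTopology α] [MeasurableSpace α]
  [OpensMeasurableSpace α] {μ : Measure α} [NullSingletonClass μ]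

theorem setLIntegral_Ioo_eq_add {a b c : α} (hab : a < b) (hbc : b ≤ c) (g : α → ℝ≥0∞) :
    ∫⁻ x in Ioo a c, g x ∂μ = ∫⁻ x in Ioo a b, g x ∂μ + ∫⁻ x in Ioo b c, g x ∂μ := by
  have hdisj : Disjoint (Ioo a b) (Ico b c) :=
    disjoint_left.2 fun _ hxb hbx => (not_lt.2 hbx.1) hxb.2
  rw [← Ioo_union_Ico_eq_Ioo hab hbc, lintegral_union measurableSet_Ico hdisj,
    Measure.restrict_congr_set (Ioo_ae_eq_Ico (μ := μ)).symm]

end IntervalSplit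

section RegionSwap

variable {α β : Type*} [MeasurableSpace α] [MeasurableSpace β] {μ : Measure α} {ν : Measure β}

theorem setLIntegral_setLIntegral_eq_lintegral_lintegral_indicator {F : α → β → ℝ≥0∞}
    {s : Set α} {t : α → Set β} (hs : MeasurableSet s)
    (hst : MeasurableSet {p : α × β | p.1 ∈ s ∧ p.2 ∈ t p.1}) :
    ∫⁻ x in s, ∫⁻ u in t x, F x u ∂ν ∂μ
      = ∫⁻ x, ∫⁻ u,
          {p : α × β | p.1 ∈ s ∧ p.2 ∈ t p.1}.indicator (Function.uncurry F) (x, u) ∂ν ∂μ := by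
  rw [← lintegral_indicator hs]
  congr 1 with x
  by_cases hx : x ∈ s
  · have ht : MeasurableSet (t x) := by
      convert measurable_prodMk_left hst (x := x) using 1
      ext u
      simp [hx]
    rw [indicator_of_mem hx, ← lintegral_indicator ht]
    classical
    simp [indicator_apply, hx]
  · simp [hx]

theorem setLIntegral_setLIntegral_swap [SFinite μ] [SFinite ν] {F : α → β → ℝ≥0∞}
    (hF : Measurable (Function.uncurry F)) {s : Set α} {t : α → Set β} {s' : Set β}
    {t' : β → Set α} (hs : MeasurableSet s) (hs' : MeasurableSet s')
    (hst : MeasurableSet {p : α × β | p.1 ∈ s ∧ p.2 ∈ t p.1})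
    (hst' : MeasurableSet {p : β × α | p.1 ∈ s' ∧ p.2 ∈ t' p.1})
    (hR : ∀ x u, x ∈ s ∧ u ∈ t x ↔ u ∈ s' ∧ x ∈ t' u) :
    ∫⁻ x in s, ∫⁻ u in t x, F x u ∂ν ∂μ = ∫⁻ u in s', ∫⁻ x in t' u, F x u ∂μ ∂ν := by
  rw [setLIntegral_setLIntegral_eq_lintegral_lintegral_indicator hs hst,
    setLIntegral_setLIntegral_eq_lintegral_lintegral_indicator hs' hst',
    lintegral_lintegral_swap
      (f := fun x u => {p : α × β | p.1 ∈ s ∧ p.2 ∈ t p.1}.indicator (Function.uncurry F) (x, u))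
      (hF.indicator hst).aemeasurable]
  classical
  congr 1 with u
  congr 1 with x
  simp only [indicator_apply, mem_ofPred_eq, hR x u, Function.uncurry_apply_pair]

end RegionSwap

/-- Splitting of the double integral appearing in the second-order coefficient `d₂`,
using the symmetry of the integrand `f(u) f(x)` about the line `u = x`:
`∫_{x=0}^{y} ∫_{u=y−x}^{y} f(u) f(x) du dx
  = 2 ∫_{x=0}^{y/2} ∫_{u=y−x}^{y} f(u) f(x) du dx + (∫_{y/2}^{y} f(u) du)²`. -/
theorem double_integral_symmetry_split
    (f : ℝ → ℝ≥0∞) (hf : Measurable f) (y : ℝ) (hy : 0 < y) :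
    ∫⁻ x in Set.Ioo (0 : ℝ) y, ∫⁻ u in Set.Ioo (y - x) y, f u * f x
      = 2 * (∫⁻ x in Set.Ioo (0 : ℝ) (y / 2), ∫⁻ u in Set.Ioo (y - x) y, f u * f x)
        + (∫⁻ u in Set.Ioo (y / 2) y, f u) ^ 2 := by
  have hy2 : 0 < y / 2 := half_pos hy
  have hy2y : y / 2 < y := half_lt_self hy
  set C := ∫⁻ u in Ioo (y / 2) y, f u
  have inner_split : ∀ x ∈ Ioo (y / 2) y, ∫⁻ u in Ioo (y - x) y, f u * f x
      = (∫⁻ u in Ioo (y - x) (y / 2), f u * f x) + C * f x := by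
    rintro x ⟨hx, -⟩
    rw [setLIntegral_Ioo_eq_add (by linarith) hy2y.le]
    exact congrArg _ (lintegral_mul_const _ hf)
  have mirror : ∫⁻ x in Ioo (y / 2) y, ∫⁻ u in Ioo (y - x) (y / 2), f u * f x
      = ∫⁻ x in Ioo 0 (y / 2), ∫⁻ u in Ioo (y - x) y, f u * f x := by
    have hR : ∀ x u, x ∈ Ioo (y / 2) y ∧ u ∈ Ioo (y - x) (y / 2)
        ↔ u ∈ Ioo 0 (y / 2) ∧ x ∈ Ioo (y - u) y := by
      intro x u
      simp only [mem_Ioo]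
      constructor <;> intro h <;> refine ⟨⟨?_, ?_⟩, ?_, ?_⟩ <;> linarith [h.1.1, h.1.2, h.2.1, h.2.2]
    simpa only [mul_comm] using setLIntegral_setLIntegral_swap (μ := volume) (ν := volume)
      (F := fun x u => f x * f u) (by fun_prop) measurableSet_Ioo measurableSet_Ioo
      (by measurability) (by measurability) hR
  rw [setLIntegral_Ioo_eq_add hy2 hy2y.le, setLIntegral_congr_fun measurableSet_Ioo inner_split,
    lintegral_add_right _ (hf.const_mul C), lintegral_const_mul C hf, mirror]
  ring
end

section
/- Let f : ℝ → [0, ∞] be Borel measurable and y > 0. Then ∫_{x=y}^{∞} ∫_{u=−∞}^{y−x} f(u) f(x) du dx ≤ (sup_{x > y} f(x)) · ∫_{−1}^{0} (−u) f(u) du + (∫_{−∞}^{−1} f(u) du) · (∫_{y}^{∞} f(x) dx). In particular, if sup_{x>y} f(x) < ∞, ∫_{−1}^{0} (−u) f(u) du < ∞, ∫_{−∞}^{−1} f(u) du < ∞ and ∫_{y}^{∞} f(x) dx < ∞, then this double integral is finite. -/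
open MeasureTheory Set ENNReal

/-!
For `x > y` split the inner range `u < y - x` into `u < -1` and `-1 < u < min 0 (y - x)`. The first
piece contributes at most `(∫_{u<-1} f) · ∫_{x>y} f`. On the second, bound `f x` by its supremum
and apply Tonelli: for fixed `u`, the set of `x > y` with `u < y - x` is the interval `(y, y - u)`,
of length `-u`.
-/

section

variable {μ : Measure ℝ} {f : ℝ → ℝ≥0∞}

theorem lintegral_Iio_le_lintegral_Iio_add_restrict_Ioo [NullSingletonClass μ] {a b t : ℝ}
    (ht : t ≤ b) :
    ∫⁻ u in Iio t, f u ∂μ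
      ≤ ∫⁻ u in Iio a, f u ∂μ + ∫⁻ u in Iio t, f u ∂(μ.restrict (Ioo a b)) := by
  have hsub : Iio t ⊆ Iic a ∪ (Iio t ∩ Ioo a b) := by
    intro u hu
    rcases le_or_gt u a with hua | hau
    · exact Or.inl hua
    · exact Or.inr ⟨hu, hau, (mem_Iio.mp hu).trans_le ht⟩
  calc ∫⁻ u in Iio t, f u ∂μ ≤ ∫⁻ u in Iic a ∪ (Iio t ∩ Ioo a b), f u ∂μ := lintegral_mono_set hsub
    _ ≤ ∫⁻ u in Iic a, f u ∂μ + ∫⁻ u in Iio t ∩ Ioo a b, f u ∂μ := lintegral_union_le _ _ _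
    _ = ∫⁻ u in Iio a, f u ∂μ + ∫⁻ u in Iio t, f u ∂(μ.restrict (Ioo a b)) := by
      rw [Measure.restrict_congr_set Iio_ae_eq_Iic, Measure.restrict_restrict measurableSet_Iio]

theorem antitone_lintegral_Iio_sub (c : ℝ) :
    Antitone fun x => ∫⁻ u in Iio (c - x), f u ∂μ :=
  fun _ _ hxx' => lintegral_mono_set (Iio_subset_Iio (by linarith))

theorem lintegral_Ioi_lintegral_Iio_sub [SFinite μ] (hf : Measurable f) (y : ℝ) :
    ∫⁻ x in Ioi y, ∫⁻ u in Iio (y - x), f u ∂μ = ∫⁻ u, ENNReal.ofReal (-u) * f u ∂μ := by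
  have hmeas : Measurable (Function.uncurry fun x u => (Iio (y - x)).indicator f u) := by
    change Measurable ({p : ℝ × ℝ | p.2 < y - p.1}.indicator (f ∘ Prod.snd))
    exact (hf.comp measurable_snd).indicator
      (measurableSet_lt measurable_snd (measurable_const.sub measurable_fst))
  have hslice (u : ℝ) :
      ∫⁻ x in Ioi y, (Iio (y - x)).indicator f u = ENNReal.ofReal (-u) * f u := by
    have hind : (fun x => (Iio (y - x)).indicator f u) = (Iio (y - u)).indicator fun _ => f u := by
      ext x
      simp only [indicator, mem_Iio, lt_sub_comm]
    rw [hind, lintegral_indicator_const measurableSet_Iio, Measure.restrict_apply measurableSet_Iio,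
      Iio_inter_Ioi, Real.volume_Ioo, sub_sub_cancel_left, mul_comm]
  simp_rw [← lintegral_indicator measurableSet_Iio]
  rw [lintegral_lintegral_swap hmeas.aemeasurable]
  simp_rw [hslice]

end

theorem double_integral_tail_bound_and_finiteness_general
    (f : ℝ → ℝ≥0∞) (hf : Measurable f) (y : ℝ) :
    (∫⁻ x in Set.Ioi y, ∫⁻ u in Set.Iio (y - x), f u * f x)
      ≤ (⨆ x ∈ Set.Ioi y, f x) * (∫⁻ u in Set.Ioo (-1 : ℝ) 0, ENNReal.ofReal (-u) * f u)
        + (∫⁻ u in Set.Iio (-1 : ℝ), f u) * (∫⁻ x in Set.Ioi y, f x)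
    ∧ ((⨆ x ∈ Set.Ioi y, f x) < ⊤ →
        (∫⁻ u in Set.Ioo (-1 : ℝ) 0, ENNReal.ofReal (-u) * f u) < ⊤ →
        (∫⁻ u in Set.Iio (-1 : ℝ), f u) < ⊤ →
        (∫⁻ x in Set.Ioi y, f x) < ⊤ →
        (∫⁻ x in Set.Ioi y, ∫⁻ u in Set.Iio (y - x), f u * f x) < ⊤) := by
  set S := ⨆ x ∈ Ioi y, f x
  set A := ∫⁻ u in Iio (-1 : ℝ), f u
  set G := fun x => ∫⁻ u in Iio (y - x), f u ∂(volume.restrict (Ioo (-1) 0))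
  have hpoint : ∀ x ∈ Ioi y, (∫⁻ u in Iio (y - x), f u * f x) ≤ A * f x + S * G x := by
    intro x hx
    rw [lintegral_mul_const _ hf]
    calc (∫⁻ u in Iio (y - x), f u) * f x ≤ (A + G x) * f x := by
          gcongr
          exact lintegral_Iio_le_lintegral_Iio_add_restrict_Ioo (by linarith [mem_Ioi.mp hx])
      _ ≤ A * f x + S * G x := by
          rw [add_mul, mul_comm (G x)]
          gcongr
          exact le_biSup f hx
  have hbound : (∫⁻ x in Ioi y, ∫⁻ u in Iio (y - x), f u * f x)
      ≤ S * (∫⁻ u in Ioo (-1 : ℝ) 0, ENNReal.ofReal (-u) * f u) + A * ∫⁻ x in Ioi y, f x :=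
    calc (∫⁻ x in Ioi y, ∫⁻ u in Iio (y - x), f u * f x)
        ≤ ∫⁻ x in Ioi y, A * f x + S * G x := setLIntegral_mono' measurableSet_Ioi hpoint
      _ = A * (∫⁻ x in Ioi y, f x) + S * ∫⁻ x in Ioi y, G x := by
        rw [lintegral_add_left (hf.const_mul _), lintegral_const_mul _ hf,
          lintegral_const_mul _ (antitone_lintegral_Iio_sub y).measurable]
      _ = S * (∫⁻ u in Ioo (-1 : ℝ) 0, ENNReal.ofReal (-u) * f u) + A * ∫⁻ x in Ioi y, f x := by
        rw [lintegral_Ioi_lintegral_Iio_sub hf, add_comm]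
  refine ⟨hbound, fun hS hI hA hF => hbound.trans_lt ?_⟩
  exact ENNReal.add_lt_top.mpr ⟨ENNReal.mul_lt_top hS hI, ENNReal.mul_lt_top hA hF⟩

/-- Bound on the second double integral appearing in the second-order coefficient `d₂`:
`∫_{x=y}^{∞} ∫_{u=−∞}^{y−x} f(u) f(x) du dx
  ≤ (sup_{x>y} f(x)) ∫_{−1}^{0} (−u) f(u) du + (∫_{−∞}^{−1} f(u) du)(∫_{y}^{∞} f(x) dx)`;
in particular, if all quantities on the right-hand side are finite, then so is
the double integral. -/
theorem double_integral_tail_bound_and_finiteness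
    (f : ℝ → ℝ≥0∞) (hf : Measurable f) (y : ℝ) (hy : 0 < y) :
    (∫⁻ x in Set.Ioi y, ∫⁻ u in Set.Iio (y - x), f u * f x)
      ≤ (⨆ x ∈ Set.Ioi y, f x) * (∫⁻ u in Set.Ioo (-1 : ℝ) 0, ENNReal.ofReal (-u) * f u)
        + (∫⁻ u in Set.Iio (-1 : ℝ), f u) * (∫⁻ x in Set.Ioi y, f x)
    ∧ ((⨆ x ∈ Set.Ioi y, f x) < ⊤ →
        (∫⁻ u in Set.Ioo (-1 : ℝ) 0, ENNReal.ofReal (-u) * f u) < ⊤ →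
        (∫⁻ u in Set.Iio (-1 : ℝ), f u) < ⊤ →
        (∫⁻ x in Set.Ioi y, f x) < ⊤ →
        (∫⁻ x in Set.Ioi y, ∫⁻ u in Set.Iio (y - x), f u * f x) < ⊤) :=
  double_integral_tail_bound_and_finiteness_general f hf y
end

section
/- Let k > 0 and let ν : ℝ → ℝ be positive and differentiable at k (so that ν*(x) := e^x ν(x) is differentiable at k with (ν*)′(k) = e^k (ν(k) + ν′(k))). Assume that all the integrals appearing in d₂(k; ·, ·, ν) and d₂(k; ·, ·, ν*) are finite (in particular ∫_{|x|≤1} |x| |e^x − 1| ν(x) dx < ∞). Then for every b, σ ∈ ℝ, a₁(k; b, σ) − a₁(k; b, 0) = (σ²/2) e^k ν(k). That is, a non-zero volatility σ of the Gaussian component increases the second-order coefficient of the call price expansion by exactly (σ²/2) e^k ν(k). -/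
open MeasureTheory Set intervalIntegral

/-- The second-order coefficient `d₂(y; b, σ, ν)` from Figueroa-López & Houdré,
where `ν′(y)` is the derivative of `ν` at `y`. -/
noncomputable def d2 (y b σ : ℝ) (ν : ℝ → ℝ) : ℝ :=
  -σ ^ 2 * deriv ν y + 2 * b * ν y
    - (∫ x in Set.Ioi y, ν x) ^ 2 + (∫ x in Set.Ioo (y / 2) y, ν x) ^ 2
    + 2 * ∫ x in Set.Iio (-(y / 2)), (∫ u in (y - x)..y, ν u) * ν x
    - 2 * ν y * ∫ x in {x : ℝ | y / 2 < |x| ∧ |x| < 1}, x * ν x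
    + 2 * ν y * ∫ x in Set.Ioo (-(y / 2)) (y / 2), (∫ u in (y - x)..y, ν u - ν y) * ν x

/-- The drift under the share measure: `b* = b + ∫_{|x|≤1} x (e^x − 1) ν(x) dx + σ²`. -/
noncomputable def bstar (b σ : ℝ) (ν : ℝ → ℝ) : ℝ :=
  b + (∫ x in Set.Icc (-1 : ℝ) 1, x * (Real.exp x - 1) * ν x) + σ ^ 2

/-- The second-order coefficient of the call-price expansion:
`a₁(k; b, σ) = ½ [ d₂(k; b*, σ, ν*) − e^k d₂(k; b, σ, ν) ]` where `ν*(x) = e^x ν(x)`. -/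
noncomputable def a1 (k b σ : ℝ) (ν : ℝ → ℝ) : ℝ :=
  (1 / 2) * (d2 k (bstar b σ ν) σ (fun x => Real.exp x * ν x) - Real.exp k * d2 k b σ ν)

/-! The volatility `σ` enters `a₁` only through the term `-σ² ν′(k)` of `d₂` and the shift `σ²` of
the drift `b*`. With `(ν*)′(k) = e^k (ν(k) + ν′(k))`, the `ν′(k)` contributions of the two `d₂`
terms cancel, and what remains is the drift shift `2 σ² ν*(k) = 2 σ² e^k ν(k)`, halved. -/

theorem d2_eq_d2_zero_zero_sub_add (y b σ : ℝ) (ν : ℝ → ℝ) :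
    d2 y b σ ν = d2 y 0 0 ν - σ ^ 2 * deriv ν y + 2 * b * ν y := by
  simp only [d2]
  ring

theorem bstar_eq_bstar_zero_add (b σ : ℝ) (ν : ℝ → ℝ) :
    bstar b σ ν = bstar b 0 ν + σ ^ 2 := by
  simp only [bstar]
  ring

theorem deriv_exp_mul {f : ℝ → ℝ} {y : ℝ} (hf : DifferentiableAt ℝ f y) :
    deriv (fun x => Real.exp x * f x) y = Real.exp y * (f y + deriv f y) := by
  rw [deriv_fun_mul (Real.differentiable_exp y) hf, Real.deriv_exp]
  ring

theorem a1_gaussian_component_effect_general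
    (k : ℝ) (ν : ℝ → ℝ)
    (hνdiff : DifferentiableAt ℝ ν k) :
    ∀ b σ : ℝ, a1 k b σ ν - a1 k b 0 ν = σ ^ 2 / 2 * Real.exp k * ν k := by
  intro b σ
  rw [a1, a1, bstar_eq_bstar_zero_add b σ,
    d2_eq_d2_zero_zero_sub_add k (bstar b 0 ν + σ ^ 2) σ,
    d2_eq_d2_zero_zero_sub_add k (bstar b 0 ν) 0, d2_eq_d2_zero_zero_sub_add k b σ,
    d2_eq_d2_zero_zero_sub_add k b 0, deriv_exp_mul hνdiff]
  ring

/-- A non-zero volatility `σ` of the Gaussian component increases the second-order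
coefficient of the call-price expansion by exactly `(σ²/2) e^k ν(k)`:
`a₁(k; b, σ) − a₁(k; b, 0) = (σ²/2) e^k ν(k)`. -/
theorem a1_gaussian_component_effect
    (k : ℝ) (hk : 0 < k) (ν : ℝ → ℝ)
    (hνpos : ∀ x, 0 < ν x)
    (hνdiff : DifferentiableAt ℝ ν k)
    (habs : IntegrableOn (fun x => |x| * |Real.exp x - 1| * ν x) (Set.Icc (-1 : ℝ) 1))
    (hI1 : IntegrableOn ν (Set.Ioi k))
    (hI1s : IntegrableOn (fun x => Real.exp x * ν x) (Set.Ioi k))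
    (hI2 : IntegrableOn (fun x => (∫ u in (k - x)..k, ν u) * ν x) (Set.Iio (-(k / 2))))
    (hI2s : IntegrableOn
      (fun x => (∫ u in (k - x)..k, Real.exp u * ν u) * (Real.exp x * ν x))
      (Set.Iio (-(k / 2))))
    (hI3 : IntegrableOn (fun x => x * ν x) {x : ℝ | k / 2 < |x| ∧ |x| < 1})
    (hI3s : IntegrableOn (fun x => x * (Real.exp x * ν x)) {x : ℝ | k / 2 < |x| ∧ |x| < 1})
    (hI4 : IntegrableOn (fun x => (∫ u in (k - x)..k, ν u - ν k) * ν x)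
      (Set.Ioo (-(k / 2)) (k / 2)))
    (hI4s : IntegrableOn
      (fun x => (∫ u in (k - x)..k, Real.exp u * ν u - Real.exp k * ν k) * (Real.exp x * ν x))
      (Set.Ioo (-(k / 2)) (k / 2))) :
    ∀ b σ : ℝ, a1 k b σ ν - a1 k b 0 ν = σ ^ 2 / 2 * Real.exp k * ν k :=
  a1_gaussian_component_effect_general k ν hνdiff
end

section
/- Let C, G, M > 0, Y ∈ (1, 2) and b̂ ∈ ℝ, and let ψ : ℝ → ℂ be the CGMY characteristic exponent ψ(u) := C Γ(−Y) ((M − iu)^Y + (G + iu)^Y − M^Y − G^Y) + i b̂ u, where complex powers are principal-branch powers and Γ is the real Gamma function. Then for every u ∈ ℝ, lim_{t → 0+} t · ψ(u · t^{−1/Y}) = −2 C Γ(−Y) |cos(Yπ/2)| · |u|^Y. (Scaling limit of the CGMY characteristic exponent, the key computation in Proposition 4.1.) -/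
open Filter Topology Complex

/-- The CGMY characteristic exponent
`ψ(u) = C Γ(−Y) ((M − iu)^Y + (G + iu)^Y − M^Y − G^Y) + i b̂ u`
(principal-branch complex powers, `Γ` the real Gamma function). -/
noncomputable def cgmyPsi (C G M Y bhat : ℝ) (u : ℝ) : ℂ :=
  (C * Real.Gamma (-Y) : ℝ) *
      (((M : ℂ) - Complex.I * u) ^ (Y : ℂ) + ((G : ℂ) + Complex.I * u) ^ (Y : ℂ)
        - (M : ℂ) ^ (Y : ℂ) - (G : ℂ) ^ (Y : ℂ))
    + Complex.I * bhat * u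

/-!
Put `r = t^{1/Y}`. For `r > 0` the principal power satisfies `r^Y z^Y = (r z)^Y`, so for `t > 0`
`t ψ(u t^{-1/Y}) = CΓ(-Y) ((rM - iu)^Y + (rG + iu)^Y - t (M^Y + G^Y)) + i b̂ u t^{1-1/Y}`,
which for `Y > 1` is continuous down to `t = 0`. Its value there is `CΓ(-Y) ((-iu)^Y + (iu)^Y)`;
the two powers are complex conjugate, of real part `|u|^Y cos(Yπ/2)`, and `cos(Yπ/2) ≤ 0`.
-/

open scoped Real ComplexConjugate

namespace Complex

lemma ofReal_mul_cpow {r : ℝ} (hr : 0 < r) (z w : ℂ) :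
    ((r : ℂ) * z) ^ w = (r : ℂ) ^ w * z ^ w := by
  have hr' : (r : ℂ) ≠ 0 := ofReal_ne_zero.mpr hr.ne'
  rcases eq_or_ne z 0 with rfl | hz
  · rcases eq_or_ne w 0 with rfl | hw
    · simp
    · simp [zero_cpow hw]
  rw [cpow_def_of_ne_zero (mul_ne_zero hr' hz), cpow_def_of_ne_zero hr', cpow_def_of_ne_zero hz,
    log_ofReal_mul hr hz, add_mul, exp_add, ofReal_log hr.le]

lemma ofReal_mul_cpow_eq_rpow_mul_cpow {t : ℝ} (ht : 0 < t) {Y : ℝ} (hY : Y ≠ 0) (z : ℂ) :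
    (t : ℂ) * z ^ (Y : ℂ) = (((t ^ (1 / Y) : ℝ) : ℂ) * z) ^ (Y : ℂ) := by
  rw [ofReal_mul_cpow (Real.rpow_pos_of_pos ht _), ← ofReal_cpow (Real.rpow_nonneg ht.le _),
    ← Real.rpow_mul ht.le, one_div_mul_cancel hY, Real.rpow_one]

lemma neg_I_mul_cpow_add_I_mul_cpow (u : ℝ) {Y : ℝ} (hY : Y ≠ 0) :
    (-(I * u)) ^ (Y : ℂ) + (I * u) ^ (Y : ℂ) = ((2 * |u| ^ Y * Real.cos (Y * π / 2) : ℝ) : ℂ) := by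
  rcases eq_or_ne u 0 with rfl | hu
  · simp [zero_cpow (ofReal_ne_zero.mpr hY), Real.zero_rpow hY]
  have harg : arg (I * u) = π / 2 ∨ arg (I * u) = -(π / 2) := by
    rcases hu.lt_or_gt with hneg | hpos
    · exact Or.inr (arg_eq_neg_pi_div_two_iff.mpr (by simp [hneg]))
    · exact Or.inl (arg_eq_pi_div_two_iff.mpr (by simp [hpos]))
  have hcos : Real.cos (arg (I * u) * Y) = Real.cos (Y * π / 2) := by
    rcases harg with h | h <;> rw [h]
    · ring_nf
    · rw [neg_mul, Real.cos_neg]; ring_nf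
  have hconj : -(I * u) = conj (I * u) := by simp
  rw [hconj, conj_cpow _ _ (by rcases harg with h | h <;> rw [h] <;> linarith [Real.pi_pos]),
    conj_ofReal, add_comm, add_conj, cpow_ofReal_re, hcos]
  simp [mul_assoc]

end Complex

lemma Real.cos_mul_pi_div_two_nonpos {Y : ℝ} (hY₁ : 1 ≤ Y) (hY₃ : Y ≤ 3) :
    Real.cos (Y * π / 2) ≤ 0 :=
  Real.cos_nonpos_of_pi_div_two_le_of_le (by nlinarith [Real.pi_pos]) (by nlinarith [Real.pi_pos])

noncomputable def cgmyRescaled (C G M Y bhat u t : ℝ) : ℂ :=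
  (C * Real.Gamma (-Y) : ℝ) *
      ((((t ^ (1 / Y) * M : ℝ) : ℂ) - I * u) ^ (Y : ℂ)
        + (((t ^ (1 / Y) * G : ℝ) : ℂ) + I * u) ^ (Y : ℂ)
        - t * ((M : ℂ) ^ (Y : ℂ) + (G : ℂ) ^ (Y : ℂ)))
    + I * bhat * u * ((t ^ (1 - 1 / Y) : ℝ) : ℂ)

lemma mul_cgmyPsi_rpow_neg_inv (C G M bhat u : ℝ) {Y t : ℝ} (hY : Y ≠ 0) (ht : 0 < t) :
    (t : ℂ) * cgmyPsi C G M Y bhat (u * t ^ (-(1 / Y))) = cgmyRescaled C G M Y bhat u t := by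
  have hinv : ((t ^ (1 / Y) : ℝ) : ℂ) * ((t ^ (-(1 / Y)) : ℝ) : ℂ) = 1 := by
    rw [← ofReal_mul, ← Real.rpow_add ht, add_neg_cancel, Real.rpow_zero, ofReal_one]
  have hscale (a : ℝ) (v : ℂ) :
      (t : ℂ) * (a + v * ((u * t ^ (-(1 / Y)) : ℝ) : ℂ)) ^ (Y : ℂ)
        = (((t ^ (1 / Y) * a : ℝ) : ℂ) + v * u) ^ (Y : ℂ) := by
    rw [Complex.ofReal_mul_cpow_eq_rpow_mul_cpow ht hY]
    congr 1
    push_cast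
    linear_combination v * u * hinv
  have hdrift : (t : ℂ) * ((u * t ^ (-(1 / Y)) : ℝ) : ℂ) = u * ((t ^ (1 - 1 / Y) : ℝ) : ℂ) := by
    rw [sub_eq_add_neg, Real.rpow_add ht, Real.rpow_one]
    push_cast
    ring
  have hM := hscale M (-I)
  have hG := hscale G I
  simp only [neg_mul, ← sub_eq_add_neg] at hM
  simp only [cgmyPsi, cgmyRescaled]
  linear_combination (C * Real.Gamma (-Y) : ℝ) * (hM + hG) + I * bhat * hdrift

lemma continuousAt_cgmyRescaled (C G M bhat u : ℝ) {Y : ℝ} (hY : 1 < Y) :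
    ContinuousAt (cgmyRescaled C G M Y bhat u) 0 := by
  have hinv_pos : 0 < 1 / Y := by positivity
  have hdrift_pos : 0 < 1 - 1 / Y := by rw [sub_pos, div_lt_one (by linarith)]; exact hY
  have hscale_cont : ContinuousAt (fun t : ℝ => t ^ (1 / Y)) 0 :=
    Real.continuousAt_rpow_const _ _ (Or.inr hinv_pos.le)
  have hdrift_cont : ContinuousAt (fun t : ℝ => t ^ (1 - 1 / Y)) 0 :=
    Real.continuousAt_rpow_const _ _ (Or.inr hdrift_pos.le)
  have hcpow (a : ℝ) (v : ℂ) (hv : v.re = 0) :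
      ContinuousAt (fun t : ℝ => (((t ^ (1 / Y) * a : ℝ) : ℂ) + v) ^ (Y : ℂ)) 0 := by
    refine ContinuousAt.comp (f := fun t : ℝ => ((t ^ (1 / Y) * a : ℝ) : ℂ) + v)
      (continuousAt_cpow_const_of_re_pos (Or.inl ?_) (by rw [ofReal_re]; linarith))
      (by fun_prop)
    simp [Real.zero_rpow (one_div Y ▸ hinv_pos).ne', hv]
  have hM := hcpow M (-(I * u)) (by simp)
  have hG := hcpow G (I * u) (by simp)
  simp only [← sub_eq_add_neg] at hM
  unfold cgmyRescaled
  fun_prop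

lemma cgmyRescaled_zero (C G M bhat u : ℝ) {Y : ℝ} (hY : 1 < Y) :
    cgmyRescaled C G M Y bhat u 0
      = ((2 * C * Real.Gamma (-Y) * Real.cos (Y * π / 2) * |u| ^ Y : ℝ) : ℂ) := by
  have hinv : 1 / Y ≠ 0 := by positivity
  have hdrift : 1 - 1 / Y ≠ 0 := (sub_pos.2 ((div_lt_one (by linarith)).2 hY)).ne'
  simp only [cgmyRescaled, Real.zero_rpow hinv, Real.zero_rpow hdrift, zero_mul, ofReal_zero,
    zero_sub, zero_add, mul_zero, sub_zero, add_zero,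
    Complex.neg_I_mul_cpow_add_I_mul_cpow u (by linarith : Y ≠ 0)]
  push_cast
  ring

theorem cgmy_char_exponent_scaling_limit_general
    (C G M Y bhat : ℝ)
    (hY : Y ∈ Set.Ioo (1 : ℝ) 2) (u : ℝ) :
    Tendsto (fun t : ℝ => (t : ℂ) * cgmyPsi C G M Y bhat (u * t ^ (-(1 / Y))))
      (𝓝[>] (0 : ℝ))
      (𝓝 ((-2 * C * Real.Gamma (-Y) * |Real.cos (Y * Real.pi / 2)| * |u| ^ Y : ℝ) : ℂ)) := by
  obtain ⟨hY₁, hY₂⟩ := hY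
  have hlim : Tendsto (cgmyRescaled C G M Y bhat u) (𝓝[>] 0) (𝓝 (cgmyRescaled C G M Y bhat u 0)) :=
    tendsto_nhdsWithin_of_tendsto_nhds (continuousAt_cgmyRescaled C G M bhat u hY₁).tendsto
  rw [cgmyRescaled_zero C G M bhat u hY₁] at hlim
  rw [abs_of_nonpos (Real.cos_mul_pi_div_two_nonpos hY₁.le (by linarith))]
  refine (tendsto_congr' ?_).mpr (by convert hlim using 3; ring)
  filter_upwards [self_mem_nhdsWithin] with t ht
  exact mul_cgmyPsi_rpow_neg_inv C G M bhat u (by linarith) ht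

/-- Scaling limit of the CGMY characteristic exponent (key computation of
Proposition 4.1): for `Y ∈ (1,2)`,
`lim_{t→0+} t ψ(u t^{−1/Y}) = −2 C Γ(−Y) |cos(Yπ/2)| |u|^Y`. -/
theorem cgmy_char_exponent_scaling_limit
    (C G M Y bhat : ℝ) (hC : 0 < C) (hG : 0 < G) (hM : 0 < M)
    (hY : Y ∈ Set.Ioo (1 : ℝ) 2) (u : ℝ) :
    Tendsto (fun t : ℝ => (t : ℂ) * cgmyPsi C G M Y bhat (u * t ^ (-(1 / Y))))
      (𝓝[>] (0 : ℝ))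
      (𝓝 ((-2 * C * Real.Gamma (-Y) * |Real.cos (Y * Real.pi / 2)| * |u| ^ Y : ℝ) : ℂ)) :=
  cgmy_char_exponent_scaling_limit_general C G M Y bhat hY u
end

section
/- Let k > 0, a₀ > 0, a₁ ∈ ℝ and c ≥ 0. Let V : (0, t₀) → (0, ∞) satisfy V(t) · log(1/t) → k²/2 as t → 0+. Define V₀(t) := k² / (2 log(1/t)) and V₁(t) := (1/log(1/t)) · log( 4 √π a₀ e^{−k/2} (log(1/t))^{3/2} / k ). Suppose that for every δ > 0 there exists t* > 0 such that for all t ∈ (0, t*): a₀ t + (a₁ − δ) t² ≤ (e^{k/2} V(t)^{3/2} / (√(2π) k²)) · exp(−k²/(2V(t))) · (1 + c V(t)), and (e^{k/2} V(t)^{3/2} / (√(2π) k²)) · exp(−k²/(2V(t))) · (1 − c V(t)) ≤ a₀ t + (a₁ + δ) t². Then lim_{t → 0+} log(1/t) · ( V(t)/V₀(t) − 1 − V₁(t) ) = 0; that is, V(t) = V₀(t) [ 1 + V₁(t) + o(1/log(1/t)) ] as t → 0+. (The second-order implied-variance expansion of Theorem 2.3, extracted from the two-sided sharp Black–Scholes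 sandwich.) -/
/-!
Write `L = log(1/t)` and `u = V L / (k²/2)`, so that `u → 1` and the claim is
`L (u - 1) - log A - (3/2) log L → 0` with `A = 4√π a₀ e^{-k/2} / k`.
Taking logarithms in the sandwich gives `log(F(V)/(a₀ t)) → 0`, where `F` is the
small-variance Black–Scholes term, and substituting `V = (k²/2) u / L` turns this into
`L (1 - 1/u) - (3/2) log(L/u) - log A → 0`. Solving for `L (u - 1)` only costs
`(u - 1) log L → 0`, which follows from the same equation because `log L / L → 0`.
-/

open Filter Topology Real

section AsymptoticInversion

variable {α : Type*} {l : Filter α} {L u g : α → ℝ} {a β : ℝ}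

lemma tendsto_sub_one_mul_log_of_eq (hL : Tendsto L l atTop) (hu : Tendsto u l (𝓝 1))
    (hg : Tendsto g l (𝓝 0))
    (heq : ∀ᶠ x in l, L x * (u x - 1) = u x * (g x + a + β * log (L x) - β * log (u x))) :
    Tendsto (fun x => (u x - 1) * log (L x)) l (𝓝 0) := by
  have hlogL : Tendsto (fun x => log (L x) / L x) l (𝓝 0) := by
    simpa [Function.comp_def] using (tendsto_pow_log_div_mul_add_atTop 1 0 1 one_ne_zero).comp hL
  have hlogL2 : Tendsto (fun x => log (L x) ^ 2 / L x) l (𝓝 0) := by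
    simpa [Function.comp_def] using (tendsto_pow_log_div_mul_add_atTop 1 0 2 one_ne_zero).comp hL
  have hlogu : Tendsto (fun x => log (u x)) l (𝓝 0) := by simpa using hu.log one_ne_zero
  have hlim : Tendsto (fun x => u x * ((g x + a - β * log (u x)) * (log (L x) / L x)
      + β * (log (L x) ^ 2 / L x))) l (𝓝 0) := by
    simpa using hu.mul (((hg.add_const a).sub (hlogu.const_mul β)).mul hlogL
      |>.add (hlogL2.const_mul β))
  refine hlim.congr' ?_
  filter_upwards [heq, hL.eventually_gt_atTop 0] with x hx hLx
  calc _ = L x * (u x - 1) * (log (L x) / L x) := by rw [hx]; ring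
    _ = (u x - 1) * log (L x) := by field_simp

lemma tendsto_mul_sub_one_sub_log_of_eq (hL : Tendsto L l atTop) (hu : Tendsto u l (𝓝 1))
    (hg : Tendsto g l (𝓝 0))
    (heq : ∀ᶠ x in l, g x = L x * (1 - (u x)⁻¹) + β * log (u x) - β * log (L x) - a) :
    Tendsto (fun x => L x * (u x - 1) - a - β * log (L x)) l (𝓝 0) := by
  have hmul : ∀ᶠ x in l,
      L x * (u x - 1) = u x * (g x + a + β * log (L x) - β * log (u x)) := by
    filter_upwards [heq, hu.eventually_ne one_ne_zero] with x hx hux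
    rw [hx]
    field_simp
    ring
  have hlogu : Tendsto (fun x => log (u x)) l (𝓝 0) := by simpa using hu.log one_ne_zero
  have hlim : Tendsto (fun x => u x * (g x - β * log (u x)) + a * (u x - 1)
      + β * ((u x - 1) * log (L x))) l (𝓝 0) := by
    simpa using (hu.mul (hg.sub (hlogu.const_mul β))).add ((hu.sub_const 1).const_mul a)
      |>.add ((tendsto_sub_one_mul_log_of_eq hL hu hg hmul).const_mul β)
  refine hlim.congr' ?_
  filter_upwards [hmul] with x hx
  rw [hx]
  ring

end AsymptoticInversion

lemma tendsto_div_mul_nhdsGT_zero_of_sandwich {F ε : ℝ → ℝ} {a₀ b₁ b₂ : ℝ}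
    (ha₀ : 0 < a₀) (hε : Tendsto ε (𝓝[>] 0) (𝓝 0))
    (hlow : ∀ᶠ t in 𝓝[>] 0, a₀ * t + b₁ * t ^ 2 ≤ F t * (1 + ε t))
    (hup : ∀ᶠ t in 𝓝[>] 0, F t * (1 - ε t) ≤ a₀ * t + b₂ * t ^ 2) :
    Tendsto (fun t => F t / (a₀ * t)) (𝓝[>] 0) (𝓝 1) := by
  have ht : Tendsto (fun t : ℝ => t) (𝓝[>] 0) (𝓝 0) :=
    tendsto_nhdsWithin_of_tendsto_nhds tendsto_id
  have hbound (b : ℝ) (s : ℝ → ℝ) (hs : Tendsto s (𝓝[>] 0) (𝓝 1)) :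
      Tendsto (fun t => (1 + b / a₀ * t) / s t) (𝓝[>] 0) (𝓝 1) := by
    have h := ((tendsto_const_nhds (x := (1 : ℝ))).add (ht.const_mul (b / a₀))).div hs
      one_ne_zero
    rwa [mul_zero, add_zero, div_one] at h
  have hpoly (b t : ℝ) : (1 + b / a₀ * t) * (a₀ * t) = a₀ * t + b * t ^ 2 := by
    field_simp
  refine tendsto_of_tendsto_of_tendsto_of_le_of_le'
    (hbound b₁ _ (by simpa using tendsto_const_nhds.add hε))
    (hbound b₂ _ (by simpa using tendsto_const_nhds.sub hε)) ?_ ?_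
  all_goals filter_upwards [hlow, hup, self_mem_nhdsWithin, hε.eventually (Ioo_mem_nhds
    (show (-1 : ℝ) < 0 by norm_num) one_pos)] with t hlo hhi (htpos : 0 < t) ⟨hε₁, hε₂⟩
  · rw [div_le_div_iff₀ (by linarith) (by positivity), hpoly]
    exact hlo
  · rw [div_le_div_iff₀ (by positivity) (by linarith), hpoly]
    exact hhi

noncomputable def bsSmallVarianceTerm (k V : ℝ) : ℝ :=
  exp (k / 2) * V ^ ((3 : ℝ) / 2) / (√(2 * π) * k ^ 2) * exp (-k ^ 2 / (2 * V))

lemma log_bsSmallVarianceTerm {k V : ℝ} (hk : k ≠ 0) (hV : 0 < V) :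
    log (bsSmallVarianceTerm k V) =
      k / 2 + 3 / 2 * log V - (log 2 + log π) / 2 - 2 * log k - k ^ 2 / (2 * V) := by
  have hπ := pi_pos
  rw [bsSmallVarianceTerm, log_mul (by positivity) (exp_ne_zero _), log_div (by positivity)
    (by positivity), log_mul (exp_ne_zero _) (by positivity), log_mul (by positivity)
    (by positivity), log_exp, log_exp, log_rpow hV, log_sqrt (by positivity),
    log_mul two_ne_zero hπ.ne', log_pow]
  push_cast
  ring

lemma log_bsSmallVarianceTerm_div {k a₀ t L u : ℝ} (hk : 0 < k) (ha₀ : 0 < a₀) (ht : 0 < t)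
    (hL : 0 < L) (hu : 0 < u) (htL : log t = -L) :
    log (bsSmallVarianceTerm k (k ^ 2 / 2 * u / L) / (a₀ * t)) =
      L * (1 - u⁻¹) + 3 / 2 * log u - 3 / 2 * log L
        - log (4 * √π * a₀ * exp (-k / 2) / k) := by
  have hπ := pi_pos
  have hlogV : log (k ^ 2 / 2 * u / L) = 2 * log k - log 2 + log u - log L := by
    rw [log_div (by positivity) hL.ne', log_mul (by positivity) hu.ne', log_div (by positivity)
      two_ne_zero, log_pow]
    push_cast
    ring
  have hlogA : log (4 * √π * a₀ * exp (-k / 2) / k) =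
      2 * log 2 + log π / 2 + log a₀ - k / 2 - log k := by
    rw [log_div (by positivity) hk.ne', log_mul (by positivity) (exp_ne_zero _),
      log_mul (by positivity) ha₀.ne', log_mul (by positivity) (by positivity), log_exp,
      log_sqrt hπ.le, show (4 : ℝ) = 2 ^ 2 by norm_num, log_pow]
    push_cast
    ring
  rw [log_div (by unfold bsSmallVarianceTerm; positivity) (by positivity),
    log_bsSmallVarianceTerm hk.ne' (by positivity), hlogV, hlogA, log_mul ha₀.ne' ht.ne', htL]
  field_simp
  ring

lemma mul_div_sub_one_sub_log_eq {k a₀ V L : ℝ} (hk : 0 < k) (ha₀ : 0 < a₀) (hL : 0 < L) :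
    L * (V / (k ^ 2 / (2 * L)) - 1
        - 1 / L * log (4 * √π * a₀ * exp (-k / 2) * L ^ ((3 : ℝ) / 2) / k))
      = L * (V * L / (k ^ 2 / 2) - 1) - log (4 * √π * a₀ * exp (-k / 2) / k)
        - 3 / 2 * log L := by
  rw [mul_div_right_comm _ (L ^ _), log_mul (by positivity) (by positivity), log_rpow hL]
  field_simp
  ring

lemma tendsto_log_one_div_nhdsGT_zero : Tendsto (fun t => log (1 / t)) (𝓝[>] 0) atTop := by
  simpa [Function.comp_def] using tendsto_neg_atBot_atTop.comp tendsto_log_nhdsGT_zero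

theorem implied_variance_second_order_general
    (k a₀ : ℝ) (hk : 0 < k) (ha₀ : 0 < a₀) (a₁ c : ℝ)
    (t₀ : ℝ) (ht₀ : 0 < t₀)
    (V : ℝ → ℝ) (hVpos : ∀ t, 0 < t → t < t₀ → 0 < V t)
    (hVlim : Tendsto (fun t => V t * Real.log (1 / t)) (𝓝[>] (0 : ℝ)) (𝓝 (k ^ 2 / 2)))
    (hsand : ∀ δ > (0 : ℝ), ∃ tstar > 0, ∀ t, 0 < t → t < tstar → t < t₀ →
      (a₀ * t + (a₁ - δ) * t ^ 2 ≤
        Real.exp (k / 2) * V t ^ ((3 : ℝ) / 2) / (Real.sqrt (2 * Real.pi) * k ^ 2)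
          * Real.exp (-k ^ 2 / (2 * V t)) * (1 + c * V t)) ∧
      (Real.exp (k / 2) * V t ^ ((3 : ℝ) / 2) / (Real.sqrt (2 * Real.pi) * k ^ 2)
          * Real.exp (-k ^ 2 / (2 * V t)) * (1 - c * V t) ≤
        a₀ * t + (a₁ + δ) * t ^ 2)) :
    Tendsto (fun t => Real.log (1 / t) *
        (V t / (k ^ 2 / (2 * Real.log (1 / t))) - 1
          - 1 / Real.log (1 / t) *
            Real.log (4 * Real.sqrt Real.pi * a₀ * Real.exp (-k / 2)
              * Real.log (1 / t) ^ ((3 : ℝ) / 2) / k)))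
      (𝓝[>] (0 : ℝ)) (𝓝 0) := by
  set L : ℝ → ℝ := fun t => log (1 / t)
  set u : ℝ → ℝ := fun t => V t * L t / (k ^ 2 / 2)
  have hL : Tendsto L (𝓝[>] 0) atTop := tendsto_log_one_div_nhdsGT_zero
  have hu : Tendsto u (𝓝[>] 0) (𝓝 1) := by
    have h := hVlim.div_const (k ^ 2 / 2)
    rwa [div_self (by positivity)] at h
  have hV : Tendsto V (𝓝[>] 0) (𝓝 0) := by
    refine (hVlim.div_atTop hL).congr' ?_
    filter_upwards [hL.eventually_gt_atTop 0] with t hLt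
    exact mul_div_cancel_right₀ _ hLt.ne'
  obtain ⟨tstar, htstar, hsand₁⟩ := hsand 1 one_pos
  have hsmall : ∀ᶠ t in 𝓝[>] (0 : ℝ), 0 < t ∧ t < tstar ∧ t < t₀ := by
    filter_upwards [Ioo_mem_nhdsGT (lt_min htstar ht₀)] with t ⟨ht, htmin⟩
    exact ⟨ht, lt_min_iff.1 htmin⟩
  have hbounds := hsmall.mono fun t ⟨ht, htstar, ht₀⟩ => hsand₁ t ht htstar ht₀
  have hratio := tendsto_div_mul_nhdsGT_zero_of_sandwich (F := fun t => bsSmallVarianceTerm k (V t))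
    ha₀ (by simpa using hV.const_mul c) (hbounds.mono fun _ h => h.1)
    (hbounds.mono fun _ h => h.2)
  refine (tendsto_mul_sub_one_sub_log_of_eq hL hu
    (a := log (4 * √π * a₀ * exp (-k / 2) / k)) (β := 3 / 2)
    (by simpa using hratio.log one_ne_zero) ?_).congr' ?_
  · filter_upwards [hsmall, hL.eventually_gt_atTop 0] with t ⟨ht, _, ht₀⟩ hLt
    have hVt := hVpos t ht ht₀
    have hV_eq : V t = k ^ 2 / 2 * u t / L t := by
      simp only [u]
      field_simp
    rw [hV_eq]
    exact log_bsSmallVarianceTerm_div hk ha₀ ht hLt (by positivity) (by simp [L])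
  · filter_upwards [hL.eventually_gt_atTop 0] with t hLt
    exact (mul_div_sub_one_sub_log_eq hk ha₀ hLt).symm

/-- Second-order implied-variance expansion (Theorem 2.3), extracted from the
two-sided sharp Black–Scholes sandwich: with
`V₀(t) = k²/(2 log(1/t))` and
`V₁(t) = log(4√π a₀ e^{−k/2} (log(1/t))^{3/2} / k) / log(1/t)`,
if `V(t) log(1/t) → k²/2` and the call price `a₀ t + a₁ t² + o(t²)` is sandwiched
between `(e^{k/2} V^{3/2}/(√(2π) k²)) e^{−k²/(2V)} (1 ± cV)`, then
`log(1/t) (V(t)/V₀(t) − 1 − V₁(t)) → 0`, i.e.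
`V(t) = V₀(t)[1 + V₁(t) + o(1/log(1/t))]` as `t → 0+`. -/
theorem implied_variance_second_order
    (k a₀ : ℝ) (hk : 0 < k) (ha₀ : 0 < a₀) (a₁ c : ℝ) (hc : 0 ≤ c)
    (t₀ : ℝ) (ht₀ : 0 < t₀)
    (V : ℝ → ℝ) (hVpos : ∀ t, 0 < t → t < t₀ → 0 < V t)
    (hVlim : Tendsto (fun t => V t * Real.log (1 / t)) (𝓝[>] (0 : ℝ)) (𝓝 (k ^ 2 / 2)))
    (hsand : ∀ δ > (0 : ℝ), ∃ tstar > 0, ∀ t, 0 < t → t < tstar → t < t₀ →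
      (a₀ * t + (a₁ - δ) * t ^ 2 ≤
        Real.exp (k / 2) * V t ^ ((3 : ℝ) / 2) / (Real.sqrt (2 * Real.pi) * k ^ 2)
          * Real.exp (-k ^ 2 / (2 * V t)) * (1 + c * V t)) ∧
      (Real.exp (k / 2) * V t ^ ((3 : ℝ) / 2) / (Real.sqrt (2 * Real.pi) * k ^ 2)
          * Real.exp (-k ^ 2 / (2 * V t)) * (1 - c * V t) ≤
        a₀ * t + (a₁ + δ) * t ^ 2)) :
    Tendsto (fun t => Real.log (1 / t) *
        (V t / (k ^ 2 / (2 * Real.log (1 / t))) - 1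
          - 1 / Real.log (1 / t) *
            Real.log (4 * Real.sqrt Real.pi * a₀ * Real.exp (-k / 2)
              * Real.log (1 / t) ^ ((3 : ℝ) / 2) / k)))
      (𝓝[>] (0 : ℝ)) (𝓝 0) :=
  implied_variance_second_order_general k a₀ hk ha₀ a₁ c t₀ ht₀ V hVpos hVlim hsand
end
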